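/- Every additive group homomorphism s : E → ℝ satisfying s(E₊) ⊆ [0, ∞) and s(1, 1, 0) = 1 is given by s(r, x, y) = r for all (r, x, y) ∈ E; that is, the ordered group (E, E₊) with order unit (1, 1, 0) has a unique state, namely projection onto the first coordinate. -/
import Mathlib


/-- The additive subgroup `E` of `ℝ × ℤ × ℤ`: all triples `(r, x, y)` such that
`r = (j + k√3)/5^(6i)`, `x ≡ j (mod 9)` and `y ≡ k (mod 3)` for some integers `i, j, k`. -/
def Eset : Set (ℝ × ℤ × ℤ) :=
  {p | ∃ i j k : ℤ, p.1 = ((j : ℝ) + (k : ℝ) * Real.sqrt 3) / (5 : ℝ) ^ (6 * i) ∧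
    p.2.1 ≡ j [ZMOD 9] ∧ p.2.2 ≡ k [ZMOD 3]}

/-- The positive cone `E₊ = {(r, x, y) ∈ E : r > 0} ∪ {(0, 0, 0)}`. -/
def Epos : Set (ℝ × ℤ × ℤ) :=
  {p | p ∈ Eset ∧ 0 < p.1} ∪ {0}

/-- An order automorphism of `(E, E₊)`: an additive group automorphism of `E`
(a bijection of `E` onto itself which is additive on `E`) with `φ(E₊) = E₊`. -/
structure IsOrderAuto (φ : ℝ × ℤ × ℤ → ℝ × ℤ × ℤ) : Prop where
  bijOn : Set.BijOn φ Eset Eset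
  addOn : ∀ p ∈ Eset, ∀ q ∈ Eset, φ (p + q) = φ p + φ q
  posEq : φ '' Epos = Epos

namespace St16

lemma pow9 (m : ℕ) : (5:ℤ)^(6*m) ≡ 1 [ZMOD 9] := by
  calc (5:ℤ)^(6*m) = ((5:ℤ)^6)^m := by rw [pow_mul]
  _ ≡ 1^m [ZMOD 9] := Int.ModEq.pow m (by decide)
  _ = 1 := one_pow m

lemma pow3 (m : ℕ) : (5:ℤ)^(6*m) ≡ 1 [ZMOD 3] := by
  calc (5:ℤ)^(6*m) = ((5:ℤ)^6)^m := by rw [pow_mul]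
  _ ≡ 1^m [ZMOD 3] := Int.ModEq.pow m (by decide)
  _ = 1 := one_pow m

lemma absorb9 (a : ℤ) (m : ℕ) : a ≡ a * 5^(6*m) [ZMOD 9] := by
  simpa using ((pow9 m).symm.mul_left a)

lemma absorb3 (a : ℤ) (m : ℕ) : a ≡ a * 5^(6*m) [ZMOD 3] := by
  simpa using ((pow3 m).symm.mul_left a)

lemma mem_iff (p : ℝ × ℤ × ℤ) : p ∈ Eset ↔ ∃ (i : ℕ) (j k : ℤ),
    p.1 = ((j : ℝ) + (k : ℝ) * Real.sqrt 3) / (5 : ℝ) ^ (6 * i) ∧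
    p.2.1 ≡ j [ZMOD 9] ∧ p.2.2 ≡ k [ZMOD 3] := by
  constructor
  · rintro ⟨i, j, k, hr, hx, hy⟩
    rcases le_or_gt 0 i with hi | hi
    · refine ⟨i.toNat, j, k, ?_, hx, hy⟩
      rw [hr, show (6:ℤ)*i = ((6*i.toNat : ℕ) : ℤ) by omega, zpow_natCast]
    · set m := (-i).toNat with hm
      have h6 : (6 : ℤ) * i = -(6 * m : ℕ) := by omega
      have hpow : (5:ℝ) ^ (6*i) = ((5:ℝ) ^ (6*m : ℕ))⁻¹ := by
        rw [h6, zpow_neg, zpow_natCast]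
      refine ⟨0, j * 5^(6*m), k * 5^(6*m), ?_, ?_, ?_⟩
      · rw [hr, hpow]
        have : ((5:ℝ) ^ (6*m : ℕ)) ≠ 0 := by positivity
        push_cast
        field_simp
      · exact hx.trans (absorb9 j m)
      · exact hy.trans (absorb3 k m)
  · rintro ⟨i, j, k, hr, hx, hy⟩
    refine ⟨(i:ℤ), j, k, ?_, hx, hy⟩
    rw [hr, show (6:ℤ)*(i:ℤ) = ((6*i : ℕ) : ℤ) by omega, zpow_natCast]

lemma zero_mem : (0 : ℝ × ℤ × ℤ) ∈ Eset :=
  ⟨0, 0, 0, by norm_num, by decide, by decide⟩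

lemma one_mem : ((1:ℝ), (1:ℤ), (0:ℤ)) ∈ Eset :=
  ⟨0, 1, 0, by norm_num, by decide, by decide⟩

lemma add_mem {p q : ℝ × ℤ × ℤ} (hp : p ∈ Eset) (hq : q ∈ Eset) : p + q ∈ Eset := by
  rw [mem_iff] at hp hq ⊢
  obtain ⟨i1, j1, k1, hr1, hx1, hy1⟩ := hp
  obtain ⟨i2, j2, k2, hr2, hx2, hy2⟩ := hq
  refine ⟨i1 + i2, j1 * 5^(6*i2) + j2 * 5^(6*i1), k1 * 5^(6*i2) + k2 * 5^(6*i1), ?_, ?_, ?_⟩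
  · have h1 : ((5:ℝ) ^ (6*i1 : ℕ)) ≠ 0 := by positivity
    have h2 : ((5:ℝ) ^ (6*i2 : ℕ)) ≠ 0 := by positivity
    show p.1 + q.1 = _
    rw [hr1, hr2]
    rw [show 6 * (i1 + i2) = 6*i1 + 6*i2 by ring, pow_add]
    push_cast
    field_simp
    ring
  · show p.2.1 + q.2.1 ≡ _ [ZMOD 9]
    exact (hx1.trans (absorb9 j1 i2)).add (hx2.trans (absorb9 j2 i1))
  · show p.2.2 + q.2.2 ≡ _ [ZMOD 3]
    exact (hy1.trans (absorb3 k1 i2)).add (hy2.trans (absorb3 k2 i1))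

lemma neg_mem {p : ℝ × ℤ × ℤ} (hp : p ∈ Eset) : -p ∈ Eset := by
  obtain ⟨i, j, k, hr, hx, hy⟩ := hp
  refine ⟨i, -j, -k, ?_, hx.neg, hy.neg⟩
  show -p.1 = _
  rw [hr]
  push_cast
  ring

def EG : AddSubgroup (ℝ × ℤ × ℤ) where
  carrier := Eset
  zero_mem' := zero_mem
  add_mem' := add_mem
  neg_mem' := neg_mem

lemma sqrt3_irr : Irrational (Real.sqrt 3) := by
  simpa using (Nat.prime_three).irrational_sqrt

lemma eq_zero_of_first_zero {j k : ℤ} (h : ((j:ℝ) + (k:ℝ) * Real.sqrt 3) = 0) :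
    j = 0 ∧ k = 0 := by
  by_cases hk : k = 0
  · subst hk
    constructor
    · exact_mod_cast by simpa using h
    · rfl
  · exfalso
    apply sqrt3_irr
    refine ⟨(-j : ℚ)/(k : ℚ), ?_⟩
    have hk' : (k:ℝ) ≠ 0 := Int.cast_ne_zero.mpr hk
    push_cast
    field_simp
    linarith

section S
variable (s : ℝ × ℤ × ℤ → ℝ)
    (hadd : ∀ p ∈ Eset, ∀ q ∈ Eset, s (p + q) = s p + s q)
    (hpos : ∀ p ∈ Epos, 0 ≤ s p)
    (hunit : s ((1 : ℝ), (1 : ℤ), (0 : ℤ)) = 1)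

include hadd

lemma s_zero : s 0 = 0 := by
  have := hadd 0 zero_mem 0 zero_mem
  simp at this
  linarith

lemma s_neg {p : ℝ × ℤ × ℤ} (hp : p ∈ Eset) : s (-p) = - s p := by
  have := hadd p hp (-p) (neg_mem hp)
  simp at this
  have h0 := s_zero s hadd
  linarith

lemma s_nsmul {p : ℝ × ℤ × ℤ} (hp : p ∈ Eset) (n : ℕ) : s (n • p) = n * s p := by
  induction n with
  | zero => simpa using s_zero s hadd
  | succ n ih =>
    rw [succ_nsmul, hadd _ (EG.nsmul_mem hp n) _ hp, ih]
    push_cast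
    ring

lemma s_zsmul {p : ℝ × ℤ × ℤ} (hp : p ∈ Eset) (n : ℤ) : s (n • p) = n * s p := by
  rcases le_or_gt 0 n with h | h
  · lift n to ℕ using h
    rw [natCast_zsmul]
    exact_mod_cast s_nsmul s hadd hp n
  · have hn : n = -(-n).toNat := by omega
    rw [hn, neg_zsmul, natCast_zsmul, s_neg s hadd (EG.nsmul_mem hp _),
      s_nsmul s hadd hp]
    push_cast
    ring

include hpos hunit

lemma s_ker {d : ℝ × ℤ × ℤ} (hd : d ∈ Eset) (hd1 : d.1 = 0) : s d = 0 := by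
  set u : ℝ × ℤ × ℤ := ((1:ℝ), (1:ℤ), (0:ℤ)) with hu
  have hukey : ∀ n : ℕ, ∀ e ∈ Eset, e.1 = 0 → 0 ≤ 1 + n * s e := by
    intro n e he he1
    have hmem : u + n • e ∈ Eset := add_mem one_mem (EG.nsmul_mem he n)
    have hfst : (u + n • e).1 = 1 := by
      simp [hu, he1]
    have : 0 ≤ s (u + n • e) := hpos _ (Or.inl ⟨hmem, by rw [hfst]; norm_num⟩)
    rwa [hadd _ one_mem _ (EG.nsmul_mem he n), s_nsmul s hadd he, hunit] at this
  by_contra h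
  have habs : 0 < |s d| := abs_pos.mpr h
  obtain ⟨n, hn⟩ := exists_nat_gt (1 / |s d|)
  have hn' : 1 < n * |s d| := by
    rw [div_lt_iff₀ habs] at hn
    linarith
  have h1 := hukey n d hd hd1
  have h2 := hukey n (-d) (neg_mem hd) (by simp [hd1])
  rw [s_neg s hadd hd] at h2
  rcases abs_cases (s d) with ⟨he, _⟩ | ⟨he, _⟩ <;> rw [he] at hn' <;> nlinarith

lemma s_congr {p q : ℝ × ℤ × ℤ} (hp : p ∈ Eset) (hq : q ∈ Eset) (h : p.1 = q.1) :
    s p = s q := by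
  have hd : p - q ∈ Eset := by
    rw [sub_eq_add_neg]; exact add_mem hp (neg_mem hq)
  have hd1 : (p - q).1 = 0 := by simp [h]
  have := hadd q hq (p - q) hd
  rw [s_ker s hadd hpos hunit hd hd1] at this
  simpa using this

lemma s_nonneg {p : ℝ × ℤ × ℤ} (hp : p ∈ Eset) (h : 0 ≤ p.1) : 0 ≤ s p := by
  rcases lt_or_eq_of_le h with h | h
  · exact hpos _ (Or.inl ⟨hp, h⟩)
  · rw [s_ker s hadd hpos hunit hp h.symm]

end S

noncomputable def U (i : ℕ) : ℝ × ℤ × ℤ := (((5:ℝ) ^ (6*i))⁻¹, 1, 0)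

lemma U_mem (i : ℕ) : U i ∈ Eset := by
  rw [mem_iff]
  refine ⟨i, 1, 0, ?_, Int.ModEq.refl 1, Int.ModEq.refl 0⟩
  show ((5:ℝ) ^ (6*i))⁻¹ = _
  norm_num

section S2
variable (s : ℝ × ℤ × ℤ → ℝ)
    (hadd : ∀ p ∈ Eset, ∀ q ∈ Eset, s (p + q) = s p + s q)
    (hpos : ∀ p ∈ Epos, 0 ≤ s p)
    (hunit : s ((1 : ℝ), (1 : ℤ), (0 : ℤ)) = 1)

include hadd hpos hunit

lemma s_U (i : ℕ) : s (U i) = ((5:ℝ) ^ (6*i))⁻¹ := by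
  set n : ℕ := 5 ^ (6*i) with hn
  have hpow : ((5:ℝ) ^ (6*i)) = (n : ℝ) := by push_cast [hn]; ring
  have hP : (0:ℝ) < (5:ℝ) ^ (6*i) := by positivity
  have hmem1 : n • U i ∈ Eset := EG.nsmul_mem (U_mem i) n
  have hfst : (n • U i).1 = 1 := by
    show n • (U i).1 = 1
    rw [nsmul_eq_mul]
    show (n:ℝ) * ((5:ℝ) ^ (6*i))⁻¹ = 1
    rw [← hpow]
    field_simp
  have h1 := s_congr s hadd hpos hunit hmem1 one_mem (by rw [hfst])
  rw [s_nsmul s hadd (U_mem i) n, hunit, ← hpow] at h1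
  field_simp at h1 ⊢
  linarith

theorem main : ∀ p ∈ Eset, s p = p.1 := by
  intro p hp
  by_contra hne
  set ε := |s p - p.1| with hε
  have hεpos : 0 < ε := abs_pos.mpr (sub_ne_zero.mpr hne)
  obtain ⟨i, hi⟩ := pow_unbounded_of_one_lt (1/ε) (by norm_num : (1:ℝ) < 5)
  have hi' : 1/ε < (5:ℝ) ^ (6*i) :=
    hi.trans_le (pow_le_pow_right₀ (by norm_num) (by omega))
  set P : ℝ := (5:ℝ) ^ (6*i) with hPdef
  have hP : 0 < P := by positivity
  have hbound : P⁻¹ < ε := by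
    have h1 : 1 < P * ε := (div_lt_iff₀ hεpos).mp hi'
    have h2 : (0:ℝ) < P⁻¹ := by positivity
    nlinarith [mul_lt_mul_of_pos_left h1 h2, inv_mul_cancel₀ hP.ne']
  set m : ℤ := ⌊p.1 * P⌋ with hm
  have hfl : (m:ℝ) ≤ p.1 * P := Int.floor_le _
  have hfu : p.1 * P < (m:ℝ) + 1 := Int.lt_floor_add_one _
  have hsU := s_U s hadd hpos hunit i
  have hmemU := U_mem i
  have hUfst : (U i).1 = P⁻¹ := rfl
  have hplow : (m:ℝ) * P⁻¹ ≤ p.1 :=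
    calc (m:ℝ) * P⁻¹ ≤ (p.1 * P) * P⁻¹ :=
          mul_le_mul_of_nonneg_right hfl (by positivity)
    _ = p.1 := by field_simp
  have hphigh : p.1 ≤ ((m:ℝ) + 1) * P⁻¹ :=
    calc p.1 = (p.1 * P) * P⁻¹ := by field_simp
    _ ≤ ((m:ℝ) + 1) * P⁻¹ := mul_le_mul_of_nonneg_right hfu.le (by positivity)
  -- lower bound on s p
  have hq1mem : p + (-m) • U i ∈ Eset := add_mem hp (EG.zsmul_mem hmemU _)
  have hq1fst : (p + (-m) • U i).1 = p.1 - (m:ℝ) * P⁻¹ := by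
    show p.1 + (-m : ℤ) • (U i).1 = _
    rw [hUfst, zsmul_eq_mul]
    push_cast
    ring
  have hq1 : 0 ≤ s p - (m:ℝ) * P⁻¹ := by
    have h0 := s_nonneg s hadd hpos hunit hq1mem
      (by rw [hq1fst, sub_nonneg]; exact hplow)
    rwa [hadd p hp _ (EG.zsmul_mem hmemU _), s_zsmul s hadd hmemU, hsU, ← hPdef,
      Int.cast_neg, neg_mul, ← sub_eq_add_neg] at h0
  -- upper bound on s p
  have hq2mem : (m+1) • U i + (-p) ∈ Eset := add_mem (EG.zsmul_mem hmemU _) (neg_mem hp)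
  have hq2fst : ((m+1) • U i + (-p)).1 = ((m:ℝ) + 1) * P⁻¹ - p.1 := by
    show ((m+1) : ℤ) • (U i).1 + -(p.1) = _
    rw [hUfst, zsmul_eq_mul]
    push_cast
    ring
  have hq2 : 0 ≤ ((m:ℝ) + 1) * P⁻¹ - s p := by
    have h0 := s_nonneg s hadd hpos hunit hq2mem
      (by rw [hq2fst, sub_nonneg]; exact hphigh)
    rw [hadd _ (EG.zsmul_mem hmemU _) _ (neg_mem hp), s_zsmul s hadd hmemU, hsU,
      ← hPdef, s_neg s hadd hp] at h0
    push_cast at h0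
    linarith
  have hfinal : ε ≤ P⁻¹ := by
    rw [hε, abs_le]
    constructor <;> nlinarith
  linarith

end S2
end St16

/-- Every additive map `s : E → ℝ` with `s(E₊) ⊆ [0, ∞)` and `s(1, 1, 0) = 1` is the
projection onto the first coordinate; i.e. the ordered group `(E, E₊)` with order unit
`(1, 1, 0)` has a unique state. -/
theorem stmt_16 (s : ℝ × ℤ × ℤ → ℝ)
    (hadd : ∀ p ∈ Eset, ∀ q ∈ Eset, s (p + q) = s p + s q)
    (hpos : ∀ p ∈ Epos, 0 ≤ s p)
    (hunit : s ((1 : ℝ), (1 : ℤ), (0 : ℤ)) = 1) :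
    ∀ p ∈ Eset, s p = p.1 := by
  exact St16.main s hadd hpos hunit
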